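/- arXiv:1901.00819 — 3 statements merged into one kernel-verified Lean document; each statement's English description precedes it below -/
import Mathlib

section
/- The minimal specific energy of the two-dimensional Euclid's hat equals −1/2; that is, the infimum over all integers n ≥ 2, all points x₁, …, xₙ ∈ ℝ² and all charges σ₁, …, σₙ ∈ {−1, 1} of (1/n)·∑_{1 ≤ i < j ≤ n} σᵢ σⱼ h(|xᵢ − xⱼ|) is equal to −1/2. -/
open Real

/-- The two-dimensional Euclid's hat function:
`h w = (2/π)(arccos w − w√(1−w²))` for `0 ≤ w ≤ 1` and `h w = 0` for `w > 1`. -/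
noncomputable def euclidHat (w : ℝ) : ℝ :=
  if w ≤ 1 then (2 / π) * (Real.arccos w - w * Real.sqrt (1 - w ^ 2)) else 0

/-!
Euclid's hat is, up to the factor `4 / π`, the area of the intersection of two discs of diameter
one whose centres are at distance `w`: the lens between them has area `∫ s in w..1, √(1 - s ^ 2)`.
Hence `∑ i, ∑ j, σ i * σ j * h ‖x i - x j‖` is `4 / π` times the squared `L²` norm of
`∑ i, σ i • 𝟙 (ball (x i) (1 / 2))`, so it is nonnegative. Its diagonal contributes `n`, so the
sum over pairs `i < j` is at least `-n / 2`; two opposite charges at the same point attain this.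
-/

open MeasureTheory Set Metric

theorem sum_sum_eq_sum_diag_add_two_nsmul {ι M : Type*} [Fintype ι] [LinearOrder ι]
    [AddCommMonoid M] (a : ι → ι → M) (ha : ∀ i j, a i j = a j i) :
    ∑ i, ∑ j, a i j = ∑ i, a i i + 2 • ∑ i, ∑ j ∈ Finset.univ.filter (i < ·), a i j := by
  have hsplit (i : ι) : ∑ j, a i j = ∑ j ∈ Finset.univ.filter (· < i), a i j + a i i
      + ∑ j ∈ Finset.univ.filter (i < ·), a i j := by
    rw [← Finset.sum_filter_add_sum_filter_not Finset.univ (i < ·), add_comm]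
    congr 1
    have : Finset.univ.filter (fun j => ¬ i < j) = insert i (Finset.univ.filter (· < i)) := by
      ext j; simp [le_iff_lt_or_eq, or_comm, eq_comm]
    rw [this, Finset.sum_insert (by simp), add_comm]
  have hlower : ∑ i, ∑ j ∈ Finset.univ.filter (· < i), a i j
      = ∑ i, ∑ j ∈ Finset.univ.filter (i < ·), a i j := by
    rw [Finset.sum_comm' (t' := Finset.univ) (s' := fun j => Finset.univ.filter (j < ·)) (by simp)]
    simp_rw [ha]
  simp_rw [hsplit, Finset.sum_add_distrib, hlower, two_nsmul]
  abel

theorem sum_sum_mul_measureReal_inter_nonneg {α ι : Type*} [MeasurableSpace α] [Fintype ι]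
    (μ : Measure α) {B : ι → Set α} (hB : ∀ i, MeasurableSet (B i)) (hμB : ∀ i, μ (B i) ≠ ⊤)
    (σ : ι → ℝ) : 0 ≤ ∑ i, ∑ j, σ i * σ j * μ.real (B i ∩ B j) := by
  let f : ι → Lp ℝ 2 μ := fun i => indicatorConstLp 2 (hB i) (hμB i) (1 : ℝ)
  calc (0 : ℝ) ≤ inner ℝ (∑ i, σ i • f i) (∑ j, σ j • f j) := real_inner_self_nonneg
    _ = _ := by
      simp only [sum_inner, inner_sum, real_inner_smul_left, real_inner_smul_right, f,
        L2.inner_indicatorConstLp_one_indicatorConstLp_one]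
      exact Finset.sum_congr rfl fun i _ => Finset.sum_congr rfl fun j _ => by
        rw [inter_comm, ← mul_assoc]; rfl

theorem hasDerivAt_arccos_sub_mul_sqrt {x : ℝ} (h₀ : -1 < x) (h₁ : x < 1) :
    HasDerivAt (fun s => arccos s - s * √(1 - s ^ 2)) (-2 * √(1 - x ^ 2)) x := by
  have hpos : 0 < 1 - x ^ 2 := by nlinarith
  have hsqrt : HasDerivAt (fun s => √(1 - s ^ 2)) (-(2 * x) / (2 * √(1 - x ^ 2))) x :=
    (by simpa using (hasDerivAt_pow 2 x).const_sub 1 :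
      HasDerivAt (fun s : ℝ => 1 - s ^ 2) (-(2 * x)) x).sqrt hpos.ne'
  refine ((hasDerivAt_arccos h₀.ne' h₁.ne).sub ((hasDerivAt_id' x).mul hsqrt)).congr_deriv ?_
  have hsq := mul_self_sqrt hpos.le
  have hne : √(1 - x ^ 2) ≠ 0 := by positivity
  field_simp
  linear_combination hsq

theorem integral_sqrt_one_sub_sq_to_one {d : ℝ} (h₀ : -1 ≤ d) (h₁ : d ≤ 1) :
    ∫ s in d..1, √(1 - s ^ 2) = (arccos d - d * √(1 - d ^ 2)) / 2 := by
  have hF : ContinuousOn (fun s => -(arccos s - s * √(1 - s ^ 2)) / 2) (Icc d 1) := by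
    fun_prop
  rw [intervalIntegral.integral_eq_sub_of_hasDerivAt_of_le h₁ hF
    (fun x hx => by
      simpa using ((hasDerivAt_arccos_sub_mul_sqrt (h₀.trans_lt hx.1) hx.2).neg).div_const 2)
    (Continuous.intervalIntegrable (by fun_prop) _ _)]
  simp
  ring

theorem euclidHat_eq_integral {w : ℝ} (h₀ : -1 ≤ w) (h₁ : w ≤ 1) :
    euclidHat w = 4 / π * ∫ s in w..1, √(1 - s ^ 2) := by
  rw [euclidHat, if_pos h₁, integral_sqrt_one_sub_sq_to_one h₀ h₁]
  ring

theorem euclidHat_nonneg {w : ℝ} (hw : -1 ≤ w) : 0 ≤ euclidHat w := by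
  rcases le_or_gt w 1 with h₁ | h₁
  · rw [euclidHat_eq_integral hw h₁]
    exact mul_nonneg (by positivity)
      (intervalIntegral.integral_nonneg h₁ fun _ _ => sqrt_nonneg _)
  · simp [euclidHat, h₁.not_ge]

theorem euclidHat_zero : euclidHat 0 = 1 := by
  simp [euclidHat, pi_ne_zero]

def lens (d : ℝ) : Set (ℝ × ℝ) :=
  {p | p.1 ^ 2 + p.2 ^ 2 < 1 / 4 ∧ (p.1 - d) ^ 2 + p.2 ^ 2 < 1 / 4}

noncomputable def lensHalfWidth (d u : ℝ) : ℝ :=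
  √(1 / 4 - max (u ^ 2) ((u - d) ^ 2))

theorem lens_eq_regionBetween (d : ℝ) :
    lens d = regionBetween (-lensHalfWidth d) (lensHalfWidth d) (Ioo (d - 1 / 2) (1 / 2)) := by
  ext ⟨u, v⟩
  have hwidth : |v| < lensHalfWidth d u ↔ v ^ 2 + max (u ^ 2) ((u - d) ^ 2) < 1 / 4 := by
    rw [lensHalfWidth, lt_sqrt (abs_nonneg v), sq_abs, lt_sub_iff_add_lt]
  simp only [lens, regionBetween, mem_ofPred_eq, Set.mem_Ioo, Pi.neg_apply]
  rw [← abs_lt, hwidth, add_max, max_lt_iff]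
  constructor
  · rintro ⟨h₁, h₂⟩
    exact ⟨⟨by nlinarith, by nlinarith⟩, by linarith, by linarith⟩
  · rintro ⟨-, h₁, h₂⟩
    exact ⟨by linarith, by linarith⟩

theorem lensHalfWidth_sub_left (d u : ℝ) : lensHalfWidth d (d - u) = lensHalfWidth d u := by
  rw [lensHalfWidth, lensHalfWidth, max_comm]
  ring_nf

theorem two_mul_lensHalfWidth {d u : ℝ} (hd : 0 ≤ d) (hu : d ≤ 2 * u) :
    2 * lensHalfWidth d u = √(1 - (2 * u) ^ 2) := by
  rw [lensHalfWidth, max_eq_left (by nlinarith),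
    show 1 - (2 * u) ^ 2 = 2 ^ 2 * (1 / 4 - u ^ 2) by ring, sqrt_mul (by positivity),
    sqrt_sq zero_le_two]

theorem continuous_lensHalfWidth (d : ℝ) : Continuous (lensHalfWidth d) := by
  unfold lensHalfWidth; fun_prop

theorem integral_two_mul_lensHalfWidth {d : ℝ} (hd₀ : 0 ≤ d) (hd₁ : d ≤ 1) :
    ∫ u in d - 1 / 2..1 / 2, 2 * lensHalfWidth d u = ∫ s in d..1, √(1 - s ^ 2) := by
  have hint (a b : ℝ) : IntervalIntegrable (fun u => 2 * lensHalfWidth d u) volume a b :=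
    (continuous_const.mul (continuous_lensHalfWidth d)).intervalIntegrable a b
  have hleft : ∫ u in d - 1 / 2..d / 2, 2 * lensHalfWidth d u
      = ∫ u in d / 2..1 / 2, 2 * lensHalfWidth d u := by
    have := intervalIntegral.integral_comp_sub_left (fun u => 2 * lensHalfWidth d u) d
      (a := d - 1 / 2) (b := d / 2)
    simp only [lensHalfWidth_sub_left] at this
    rwa [show d - d / 2 = d / 2 by ring, sub_sub_cancel] at this
  have hright : ∫ u in d / 2..1 / 2, 2 * lensHalfWidth d u
      = ∫ u in d / 2..1 / 2, √(1 - (2 * u) ^ 2) :=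
    intervalIntegral.integral_congr fun u hu => by
      rw [Set.uIcc_of_le (by linarith)] at hu
      exact two_mul_lensHalfWidth hd₀ (by linarith [hu.1])
  rw [← intervalIntegral.integral_add_adjacent_intervals (hint _ (d / 2)) (hint _ _), hleft,
    hright, intervalIntegral.integral_comp_mul_left (fun s => √(1 - s ^ 2)) two_ne_zero]
  ring_nf

theorem volume_lens {d : ℝ} (hd₀ : 0 ≤ d) (hd₁ : d ≤ 1) :
    volume (lens d) = ENNReal.ofReal (∫ s in d..1, √(1 - s ^ 2)) := by
  have hint : IntegrableOn (lensHalfWidth d) (Ioo (d - 1 / 2) (1 / 2)) :=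
    (continuous_lensHalfWidth d).integrableOn_Icc.mono_set Ioo_subset_Icc_self
  rw [lens_eq_regionBetween, Measure.volume_eq_prod,
    volume_regionBetween_eq_integral hint.neg hint measurableSet_Ioo
      fun u _ => neg_le_self (sqrt_nonneg _),
    ← integral_two_mul_lensHalfWidth hd₀ hd₁, intervalIntegral.integral_of_le (by linarith),
    integral_Ioc_eq_integral_Ioo]
  congr 2 with u
  simp only [Pi.sub_apply, Pi.neg_apply]
  ring

theorem isOpen_lens (d : ℝ) : IsOpen (lens d) := by
  rw [lens, ofPred_and]
  exact (isOpen_lt (by fun_prop) continuous_const).inter (isOpen_lt (by fun_prop) continuous_const)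

theorem volume_ball_inter_ball_eq_of_dist_eq {E : Type*} [NormedAddCommGroup E]
    [InnerProductSpace ℝ E] [FiniteDimensional ℝ E] [MeasurableSpace E] [BorelSpace E]
    {x y x' y' : E} (h : dist x y = dist x' y') (r s : ℝ) :
    volume (ball x r ∩ ball y s) = volume (ball x' r ∩ ball y' s) := by
  rw [dist_eq_norm', dist_eq_norm'] at h
  let R : E ≃ₗᵢ[ℝ] E := Submodule.reflection (ℝ ∙ ((y - x) - (y' - x')))ᗮ
  let ψ : E → E := fun z => R (z - x) + x'
  have hψ : MeasurePreserving ψ volume volume :=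
    (measurePreserving_add_right volume x').comp
      (R.measurePreserving.comp (measurePreserving_sub_right volume x))
  have hdist (z w : E) : dist (ψ z) (ψ w) = dist z w := by
    simp [ψ, dist_eq_norm, ← map_sub]
  have hψx : ψ x = x' := by simp [ψ]
  have hψy : ψ y = y' := by
    change R (y - x) + x' = y'
    rw [Submodule.reflection_sub h, sub_add_cancel]
  have hpre : ball x r ∩ ball y s = ψ ⁻¹' (ball x' r ∩ ball y' s) := by
    ext z
    simp only [mem_inter_iff, mem_preimage, mem_ball, ← hψx, ← hψy, hdist]
  rw [hpre, hψ.measure_preimage (isOpen_ball.inter isOpen_ball).measurableSet.nullMeasurableSet]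

theorem volume_ball_inter_ball_single (d : ℝ) :
    volume (ball (0 : EuclideanSpace ℝ (Fin 2)) (1 / 2) ∩
      ball (EuclideanSpace.single 0 d) (1 / 2)) = volume (lens d) := by
  let Φ : EuclideanSpace ℝ (Fin 2) → ℝ × ℝ :=
    MeasurableEquiv.finTwoArrow ∘ (MeasurableEquiv.toLp 2 (Fin 2 → ℝ)).symm
  have hΦ : MeasurePreserving Φ volume volume :=
    (volume_preserving_finTwoArrow ℝ).comp
      (EuclideanSpace.volume_preserving_symm_measurableEquiv_toLp (Fin 2))
  have hpre : ball 0 (1 / 2) ∩ ball (EuclideanSpace.single 0 d) (1 / 2) = Φ ⁻¹' lens d := by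
    ext z
    simp only [mem_inter_iff, mem_ball, EuclideanSpace.dist_eq, Fin.sum_univ_two, mem_preimage,
      lens, mem_ofPred_eq]
    rw [sqrt_lt' one_half_pos, sqrt_lt' one_half_pos]
    norm_num [Φ, Real.dist_eq, sq_abs]
  rw [hpre, hΦ.measure_preimage]
  exact (isOpen_lens d).measurableSet.nullMeasurableSet

theorem volume_ball_inter_ball (x y : EuclideanSpace ℝ (Fin 2)) :
    volume (ball x (1 / 2) ∩ ball y (1 / 2)) = ENNReal.ofReal (π / 4 * euclidHat ‖x - y‖) := by
  rcases le_or_gt ‖x - y‖ 1 with h | h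
  · have hdist : dist x y = dist 0 (EuclideanSpace.single (0 : Fin 2) ‖x - y‖) := by
      simp [dist_eq_norm]
    rw [volume_ball_inter_ball_eq_of_dist_eq hdist, volume_ball_inter_ball_single,
      volume_lens (norm_nonneg _) h, euclidHat_eq_integral (by linarith [norm_nonneg (x - y)]) h]
    congr 1
    field_simp
  · rw [(ball_disjoint_ball (by norm_num [dist_eq_norm]; linarith)).inter_eq]
    simp [euclidHat, h.not_ge]

theorem sum_sum_mul_euclidHat_nonneg {ι : Type*} [Fintype ι] (x : ι → EuclideanSpace ℝ (Fin 2))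
    (σ : ι → ℝ) : 0 ≤ ∑ i, ∑ j, σ i * σ j * euclidHat ‖x i - x j‖ := by
  have hvol (i j : ι) : volume.real (ball (x i) (1 / 2) ∩ ball (x j) (1 / 2))
      = π / 4 * euclidHat ‖x i - x j‖ := by
    rw [measureReal_def, volume_ball_inter_ball, ENNReal.toReal_ofReal
      (mul_nonneg (by positivity) (euclidHat_nonneg (by linarith [norm_nonneg (x i - x j)])))]
  have h := sum_sum_mul_measureReal_inter_nonneg volume (B := fun i => ball (x i) (1 / 2))
    (fun _ => measurableSet_ball) (fun _ => measure_ball_lt_top.ne) σ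
  simp only [hvol, mul_left_comm _ (π / 4), ← Finset.mul_sum] at h
  exact (mul_nonneg_iff_of_pos_left (by positivity)).mp h

theorem neg_sum_sq_div_two_le_sum_sum_lt_mul_euclidHat {ι : Type*} [Fintype ι] [LinearOrder ι]
    (x : ι → EuclideanSpace ℝ (Fin 2)) (σ : ι → ℝ) :
    -(∑ i, σ i ^ 2) / 2 ≤
      ∑ i, ∑ j ∈ Finset.univ.filter (i < ·), σ i * σ j * euclidHat ‖x i - x j‖ := by
  have h := sum_sum_mul_euclidHat_nonneg x σ
  rw [sum_sum_eq_sum_diag_add_two_nsmul _ fun i j => by rw [norm_sub_rev]; ring] at h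
  simp only [sub_self, norm_zero, euclidHat_zero, mul_one, two_nsmul, ← sq] at h
  linarith

theorem minimal_specific_energy_euclidHat :
    sInf { e : ℝ | ∃ (n : ℕ), 2 ≤ n ∧
        ∃ (x : Fin n → EuclideanSpace ℝ (Fin 2)) (σ : Fin n → ℝ),
          (∀ j, σ j = 1 ∨ σ j = -1) ∧
          e = (1 / (n : ℝ)) *
              ∑ i : Fin n, ∑ j ∈ Finset.univ.filter (fun j => i < j),
                σ i * σ j * euclidHat ‖x i - x j‖ } = -(1 / 2) := by
  refine IsLeast.csInf_eq ⟨⟨2, le_rfl, 0, ![1, -1], fun j => ?_, ?_⟩, ?_⟩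
  · fin_cases j <;> simp
  · simp [Finset.sum_filter, Fin.sum_univ_two, euclidHat_zero]
  · rintro e ⟨n, hn, x, σ, hσ, rfl⟩
    have hσ_sq : ∑ i, σ i ^ 2 = n := by
      have hσ_one (i : Fin n) : σ i ^ 2 = 1 := by rcases hσ i with h | h <;> simp [h]
      simp [hσ_one]
    have hn_pos : (0 : ℝ) < n := by exact_mod_cast (by omega : 0 < n)
    have h := neg_sum_sq_div_two_le_sum_sum_lt_mul_euclidHat x σ
    rw [hσ_sq] at h
    calc -(1 / 2) = 1 / (n : ℝ) * (-n / 2) := by field_simp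
      _ ≤ _ := by gcongr
end

section
/- For every integer n ≥ 1, every s > 0, all points x₁, …, xₙ ∈ ℝ² and all charges σ₁, …, σₙ ∈ {−1, 1}, one has the identity ∑_{1 ≤ i, j ≤ n} σᵢ σⱼ h(|xᵢ − xⱼ|/s) = (4/(π s²)) · ∫_{ℝ²} ( ∑_{j=1}^{n} σⱼ · 𝟙_{B(xⱼ, s/2)}(z) )² dz, where 𝟙_{B(x, r)} denotes the indicator function of the closed Euclidean ball of radius r centered at x in ℝ². -/
/-!
Expanding the square, the integral equals `∑ σᵢ σⱼ |B(xᵢ, s/2) ∩ B(xⱼ, s/2)|`, so it suffices that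
two closed discs of radius `r` whose centres are at distance `d ≤ 2r` meet in area
`π r² h(d / 2r)`. Since Lebesgue measure is invariant under isometries, the centres may be taken
to be `(0, 0)` and `(d, 0)`. The section of the lens at abscissa `t` is a segment of length
`2 √(r² - max(t², (t - d)²))`; by symmetry about `t = d/2` its area is
`4 ∫_{d/2}^{r} √(r² - t²) dt`, and `(t √(r² - t²) - r² arccos(t / r)) / 2` is an antiderivative.
-/
open Real MeasureTheory

open Set Metric

theorem Real.volume_setOf_sq_le (c : ℝ) : volume {b : ℝ | b ^ 2 ≤ c} = ENNReal.ofReal (2 * √c) := by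
  rcases le_or_gt 0 c with hc | hc
  · have : {b : ℝ | b ^ 2 ≤ c} = Icc (-√c) √c := by ext b; exact Real.sq_le hc
    rw [this, Real.volume_Icc]
    ring_nf
  · have : {b : ℝ | b ^ 2 ≤ c} = ∅ :=
      eq_empty_of_forall_notMem fun b (hb : b ^ 2 ≤ c) ↦ by linarith [sq_nonneg b]
    rw [this, Real.sqrt_eq_zero'.mpr hc.le]
    simp

theorem volume_setOf_snd_sq_le {f : ℝ → ℝ} (hf : Measurable f) :
    volume {p : ℝ × ℝ | p.2 ^ 2 ≤ f p.1} = ∫⁻ t, ENNReal.ofReal (2 * √(f t)) := by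
  rw [Measure.volume_eq_prod, Measure.prod_apply (measurableSet_le (by fun_prop) (by fun_prop))]
  exact lintegral_congr fun t ↦ Real.volume_setOf_sq_le (f t)

theorem integral_sqrt_sq_sub_sq {r a : ℝ} (hr : 0 < r) (ha : -r ≤ a) (har : a ≤ r) :
    ∫ t in a..r, √(r ^ 2 - t ^ 2) = (r ^ 2 * arccos (a / r) - a * √(r ^ 2 - a ^ 2)) / 2 := by
  set F : ℝ → ℝ := fun t ↦ (t * √(r ^ 2 - t ^ 2) - r ^ 2 * arccos (t / r)) / 2
  have hderiv : ∀ t ∈ Ioo a r, HasDerivAt F √(r ^ 2 - t ^ 2) t := by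
    intro t ⟨hat, htr⟩
    have hpos : 0 < r ^ 2 - t ^ 2 := by nlinarith
    have hsqrt : HasDerivAt (fun t ↦ √(r ^ 2 - t ^ 2)) (-t / √(r ^ 2 - t ^ 2)) t := by
      convert ((hasDerivAt_pow 2 t).const_sub (r ^ 2)).sqrt hpos.ne' using 1
      field_simp
      ring
    have harccos : HasDerivAt (fun t ↦ arccos (t / r)) (-(1 / √(1 - (t / r) ^ 2)) * (1 / r)) t :=
      (hasDerivAt_arccos (by rw [ne_eq, div_eq_iff hr.ne']; linarith)
        (by rw [ne_eq, div_eq_iff hr.ne']; linarith)).comp t ((hasDerivAt_id t).div_const r)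
    have hunit : √(1 - (t / r) ^ 2) = √(r ^ 2 - t ^ 2) / r := by
      rw [show 1 - (t / r) ^ 2 = (r ^ 2 - t ^ 2) / r ^ 2 by field_simp, Real.sqrt_div hpos.le,
        Real.sqrt_sq hr.le]
    refine ((((hasDerivAt_id' t).mul hsqrt).sub (harccos.const_mul (r ^ 2))).div_const 2
      ).congr_deriv ?_
    rw [hunit]
    have hsq := Real.sq_sqrt hpos.le
    have hne := (Real.sqrt_pos.mpr hpos).ne'
    field_simp
    linear_combination -hsq
  rw [intervalIntegral.integral_eq_sub_of_hasDerivAt_of_le har (by fun_prop) hderiv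
    ((by fun_prop : Continuous fun t ↦ √(r ^ 2 - t ^ 2)).intervalIntegrable a r)]
  simp [F, div_self hr.ne']
  ring

-- Since `√` vanishes on `(-∞, 0]`, the integrand is zero off `[d - r, r]`.
theorem integral_sqrt_sq_sub_max_sq {r d : ℝ} (hd : 0 ≤ d) (hdr : d ≤ 2 * r) :
    ∫ t, √(r ^ 2 - max (t ^ 2) ((t - d) ^ 2)) = 2 * ∫ t in d / 2..r, √(r ^ 2 - t ^ 2) := by
  have hcont : Continuous fun t ↦ √(r ^ 2 - max (t ^ 2) ((t - d) ^ 2)) := by fun_prop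
  have hsupp : ∀ t ∉ Icc (d - r) r, √(r ^ 2 - max (t ^ 2) ((t - d) ^ 2)) = 0 := by
    intro t ht
    refine Real.sqrt_eq_zero'.mpr (sub_nonpos.mpr ?_)
    rcases not_and_or.mp ht with ht | ht
    · exact (show r ^ 2 ≤ (t - d) ^ 2 by nlinarith).trans (le_max_right _ _)
    · exact (show r ^ 2 ≤ t ^ 2 by nlinarith).trans (le_max_left _ _)
  have hleft : EqOn (fun t ↦ √(r ^ 2 - max (t ^ 2) ((t - d) ^ 2)))
      (fun t ↦ √(r ^ 2 - (d - t) ^ 2)) (uIcc (d - r) (d / 2)) := by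
    intro t ht
    rw [uIcc_of_le (by linarith)] at ht
    simp only
    rw [max_eq_right (by nlinarith [ht.2]), sub_sq_comm]
  have hright : EqOn (fun t ↦ √(r ^ 2 - max (t ^ 2) ((t - d) ^ 2)))
      (fun t ↦ √(r ^ 2 - t ^ 2)) (uIcc (d / 2) r) := by
    intro t ht
    rw [uIcc_of_le (by linarith)] at ht
    simp only
    rw [max_eq_left (by nlinarith [ht.1])]
  rw [← setIntegral_eq_integral_of_forall_compl_eq_zero hsupp, integral_Icc_eq_integral_Ioc,
    ← intervalIntegral.integral_of_le (by linarith),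
    ← intervalIntegral.integral_add_adjacent_intervals (b := d / 2)
      (hcont.intervalIntegrable _ _) (hcont.intervalIntegrable _ _),
    intervalIntegral.integral_congr hleft, intervalIntegral.integral_congr hright,
    intervalIntegral.integral_comp_sub_left (fun t ↦ √(r ^ 2 - t ^ 2))]
  ring_nf

theorem volume_closedBall_inter_closedBall_eq_of_dist_eq {E : Type*} [NormedAddCommGroup E]
    [InnerProductSpace ℝ E] [FiniteDimensional ℝ E] [MeasurableSpace E] [BorelSpace E]
    {x y x' y' : E} (r : ℝ) (h : dist x y = dist x' y') :
    volume (closedBall x r ∩ closedBall y r) = volume (closedBall x' r ∩ closedBall y' r) := by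
  suffices key : ∀ x y : E, volume (closedBall x r ∩ closedBall y r) =
      volume (closedBall 0 r ∩ closedBall (y - x) r) by
    obtain ⟨L, hL⟩ : ∃ L : E ≃ₗᵢ[ℝ] E, L (y - x) = y' - x' :=
      ⟨_, Submodule.reflection_sub (by rwa [← dist_eq_norm', ← dist_eq_norm'])⟩
    have hpre : L ⁻¹' (closedBall 0 r ∩ closedBall (y' - x') r) =
        closedBall 0 r ∩ closedBall (y - x) r := by
      ext z
      simp only [mem_preimage, mem_inter_iff, mem_closedBall, dist_eq_norm, sub_zero, ← hL,
        ← map_sub, L.norm_map]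
    rw [key, key x', ← hpre, L.measurePreserving.measure_preimage
      (measurableSet_closedBall.inter measurableSet_closedBall).nullMeasurableSet]
  intro x y
  rw [← measure_preimage_add _ x]
  congr 1
  ext z
  simp [dist_eq_norm]

theorem EuclideanSpace.volume_closedBall_inter_closedBall_single {r : ℝ} (hr : 0 ≤ r) (d : ℝ) :
    volume (closedBall (0 : EuclideanSpace ℝ (Fin 2)) r ∩ closedBall (single 0 d) r) =
      volume {p : ℝ × ℝ | p.2 ^ 2 ≤ r ^ 2 - max (p.1 ^ 2) ((p.1 - d) ^ 2)} := by
  let F : ℝ × ℝ → EuclideanSpace ℝ (Fin 2) :=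
    MeasurableEquiv.toLp 2 (Fin 2 → ℝ) ∘ (MeasurableEquiv.piFinTwo fun _ ↦ ℝ).symm
  have hF : MeasurePreserving F :=
    (EuclideanSpace.volume_preserving_symm_measurableEquiv_toLp (Fin 2)).symm.comp
      (volume_preserving_piFinTwo fun _ ↦ ℝ).symm
  have hpre : F ⁻¹' (closedBall 0 r ∩ closedBall (single 0 d) r) =
      {p : ℝ × ℝ | p.2 ^ 2 ≤ r ^ 2 - max (p.1 ^ 2) ((p.1 - d) ^ 2)} := by
    ext ⟨t, u⟩
    rw [mem_ofPred_eq, le_sub_comm, max_le_iff, le_sub_iff_add_le, le_sub_iff_add_le]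
    simp [F, EuclideanSpace.dist_eq, EuclideanSpace.norm_eq, Real.sqrt_le_left hr, Real.dist_eq,
      sq_abs]
  rw [← hpre, hF.measure_preimage
    (measurableSet_closedBall.inter measurableSet_closedBall).nullMeasurableSet]

theorem measureReal_lens {r d : ℝ} (hr : 0 < r) (hd : 0 ≤ d) (hdr : d ≤ 2 * r) :
    volume.real {p : ℝ × ℝ | p.2 ^ 2 ≤ r ^ 2 - max (p.1 ^ 2) ((p.1 - d) ^ 2)} =
      2 * (r ^ 2 * arccos (d / 2 / r) - d / 2 * √(r ^ 2 - (d / 2) ^ 2)) := by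
  rw [measureReal_def,
    volume_setOf_snd_sq_le (f := fun t ↦ r ^ 2 - max (t ^ 2) ((t - d) ^ 2)) (by fun_prop),
    ← integral_eq_lintegral_of_nonneg_ae (ae_of_all _ fun t ↦ by positivity) (by fun_prop),
    integral_const_mul,
    integral_sqrt_sq_sub_max_sq hd hdr, integral_sqrt_sq_sub_sq hr (by linarith) (by linarith)]
  ring

theorem EuclideanSpace.measureReal_closedBall_inter_closedBall (x y : EuclideanSpace ℝ (Fin 2))
    {r : ℝ} (hr : 0 < r) :
    volume.real (closedBall x r ∩ closedBall y r) = π * r ^ 2 * euclidHat (dist x y / (2 * r)) := by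
  set w := dist x y / (2 * r)
  have hd : dist x y = 2 * r * w := by simp only [w]; field_simp
  rcases le_or_gt w 1 with hw | hw
  · have hw0 : 0 ≤ w := by positivity
    have hdist : dist x y = dist 0 (single (0 : Fin 2) (2 * r * w)) := by
      rw [dist_zero_left, PiLp.norm_single, norm_of_nonneg (by positivity), hd]
    have hsqrt : √(r ^ 2 - (2 * r * w / 2) ^ 2) = r * √(1 - w ^ 2) := by
      rw [show r ^ 2 - (2 * r * w / 2) ^ 2 = r ^ 2 * (1 - w ^ 2) by ring,
        Real.sqrt_mul' _ (by nlinarith), Real.sqrt_sq hr.le]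
    rw [measureReal_def, volume_closedBall_inter_closedBall_eq_of_dist_eq r hdist,
      volume_closedBall_inter_closedBall_single hr.le, ← measureReal_def,
      measureReal_lens hr (by positivity) (by nlinarith), hsqrt,
      show 2 * r * w / 2 / r = w by field_simp, euclidHat, if_pos hw]
    field_simp
  · have hdisj : Disjoint (closedBall x r) (closedBall y r) :=
      closedBall_disjoint_closedBall (by rw [hd]; nlinarith)
    rw [hdisj.inter_eq, measureReal_empty, euclidHat, if_neg hw.not_ge, mul_zero]

theorem integral_sq_sum_mul_indicator {α ι : Type*} [MeasurableSpace α] {μ : Measure α}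
    (s : Finset ι) (c : ι → ℝ) {B : ι → Set α} (hB : ∀ i, MeasurableSet (B i))
    (hμB : ∀ i, μ (B i) ≠ ⊤) :
    ∫ z, (∑ j ∈ s, c j * (B j).indicator 1 z) ^ 2 ∂μ =
      ∑ i ∈ s, ∑ j ∈ s, c i * c j * μ.real (B i ∩ B j) := by
  have hsq : ∀ z, (∑ j ∈ s, c j * (B j).indicator 1 z) ^ 2 =
      ∑ i ∈ s, ∑ j ∈ s, c i * c j * (B i ∩ B j).indicator 1 z := fun z ↦ by
    simp only [sq, Finset.sum_mul_sum, inter_indicator_one, Pi.mul_apply]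
    exact Finset.sum_congr rfl fun i _ ↦ Finset.sum_congr rfl fun j _ ↦ by ring
  have hint : ∀ i j, Integrable ((B i ∩ B j).indicator 1) μ := fun i j ↦
    (integrable_indicator_iff ((hB i).inter (hB j))).mpr
      (integrableOn_const (C := (1 : ℝ)) (measure_ne_top_of_subset inter_subset_left (hμB i)))
  simp_rw [hsq]
  rw [integral_finsetSum _ fun i _ ↦ integrable_finsetSum _ fun j _ ↦ (hint i j).const_mul _]
  refine Finset.sum_congr rfl fun i _ ↦ ?_
  rw [integral_finsetSum _ fun j _ ↦ (hint i j).const_mul _]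
  refine Finset.sum_congr rfl fun j _ ↦ ?_
  rw [integral_const_mul, integral_indicator_one ((hB i).inter (hB j))]

theorem euclidHat_quadratic_identity_general
    (n : ℕ) (s : ℝ) (hs : 0 < s)
    (x : Fin n → EuclideanSpace ℝ (Fin 2))
    (σ : Fin n → ℝ) :
    ∑ i : Fin n, ∑ j : Fin n, σ i * σ j * euclidHat (‖x i - x j‖ / s)
      = (4 / (π * s ^ 2)) *
          ∫ z : EuclideanSpace ℝ (Fin 2),
            (∑ j : Fin n,
              σ j * Set.indicator (Metric.closedBall (x j) (s / 2)) (fun _ => (1 : ℝ)) z) ^ 2 := by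
  have hr : 0 < s / 2 := by positivity
  rw [show (fun _ ↦ 1 : EuclideanSpace ℝ (Fin 2) → ℝ) = 1 from rfl,
    integral_sq_sum_mul_indicator _ _ (fun _ ↦ measurableSet_closedBall)
    (fun _ ↦ measure_closedBall_lt_top.ne), Finset.mul_sum]
  refine Finset.sum_congr rfl fun i _ ↦ ?_
  rw [Finset.mul_sum]
  refine Finset.sum_congr rfl fun j _ ↦ ?_
  rw [EuclideanSpace.measureReal_closedBall_inter_closedBall _ _ hr, dist_eq_norm,
    mul_div_cancel₀ _ two_ne_zero]
  field_simp
  norm_num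

theorem euclidHat_quadratic_identity
    (n : ℕ) (hn : 1 ≤ n) (s : ℝ) (hs : 0 < s)
    (x : Fin n → EuclideanSpace ℝ (Fin 2))
    (σ : Fin n → ℝ) (hσ : ∀ j, σ j = 1 ∨ σ j = -1) :
    ∑ i : Fin n, ∑ j : Fin n, σ i * σ j * euclidHat (‖x i - x j‖ / s)
      = (4 / (π * s ^ 2)) *
          ∫ z : EuclideanSpace ℝ (Fin 2),
            (∑ j : Fin n,
              σ j * Set.indicator (Metric.closedBall (x j) (s / 2)) (fun _ => (1 : ℝ)) z) ^ 2 :=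
  euclidHat_quadratic_identity_general n s hs x σ
end

section
/- For every s ≥ 0, the integrals J(s) = ∫_s^∞ y·K₀(y)·√(y² − s²) dy and L(s) = (1/2) · ∫_s^∞ y²·K₁(y)·√(y² − s²) dy have the closed forms J(s) = (π/2)·(1 + s)·e^{−s} and L(s) = (π/4)·(3 + 3s + s²)·e^{−s}. -/
/-! The substitution `r = y √(k² + 1)` turns the defining integrals into
`K₀(y) = ∫_y^∞ e^{-r} / √(r² - y²) dr` and `y K₁(y) = ∫_y^∞ r e^{-r} / √(r² - y²) dr`.
Inserting these and exchanging the order of integration (Tonelli), the inner integral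
`∫_s^r y √(y² - s²) / √(r² - y²) dy` equals `π (r² - s²) / 4` (substitute
`y² = s² + (r² - s²) sin² θ`), so `J(s)` and `2 L(s)` become `π/4 ∫_s^∞ (r² - s²) w(r) dr` with
`w(r) = e^{-r}` and `w(r) = r e^{-r}`, which are elementary. -/

open Real MeasureTheory

/-- Modified Bessel function of the second kind of order 0, via the integral
representation `K₀(x) = ∫₀^∞ e^{−x√(k²+1)} / √(k²+1) dk`. -/
noncomputable def K0 (x : ℝ) : ℝ :=
  ∫ k in Set.Ioi (0 : ℝ), Real.exp (-x * Real.sqrt (k ^ 2 + 1)) / Real.sqrt (k ^ 2 + 1)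

/-- Modified Bessel function of the second kind of order 1, via the integral
representation `K₁(x) = ∫₀^∞ e^{−x√(k²+1)} dk`. -/
noncomputable def K1 (x : ℝ) : ℝ :=
  ∫ k in Set.Ioi (0 : ℝ), Real.exp (-x * Real.sqrt (k ^ 2 + 1))

open Set Filter Polynomial
open scoped ENNReal Topology

theorem lintegral_Ioi_inv_sqrt_sq_sub_sq_mul {y : ℝ} (hy : 0 < y) (w : ℝ → ℝ≥0∞) :
    ∫⁻ r in Ioi y, ENNReal.ofReal (1 / √(r ^ 2 - y ^ 2)) * w r
      = ∫⁻ k in Ioi 0, ENNReal.ofReal (1 / √(k ^ 2 + 1)) * w (y * √(k ^ 2 + 1)) := by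
  set f : ℝ → ℝ := fun k => y * √(k ^ 2 + 1)
  have hf_mono : StrictMonoOn f (Ici 0) := fun a (ha : 0 ≤ a) b _ hab => by
    simp only [f]
    gcongr
  have hf_deriv (k : ℝ) : HasDerivAt f (y * (k / √(k ^ 2 + 1))) k := by
    have hk : k ^ 2 + 1 ≠ 0 := by positivity
    refine ((((hasDerivAt_pow 2 k).add_const 1).sqrt hk).const_mul y).congr_deriv ?_
    field_simp
    norm_num
  have hf_top : Tendsto f atTop atTop := by
    refine tendsto_atTop_mono (fun k => ?_) (tendsto_id.const_mul_atTop hy)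
    simp only [id, f]
    gcongr
    exact le_sqrt_of_sq_le (by linarith)
  have hf_image : f '' Ioi 0 = Ioi y := by
    have hf0 : f 0 = y := by simp [f]
    refine (hf0 ▸ hf_mono.image_Ioi_subset).antisymm ?_
    exact hf0 ▸ intermediate_value_Ioi (by fun_prop) hf_top
  rw [← hf_image, lintegral_image_eq_lintegral_deriv_mul_of_monotoneOn measurableSet_Ioi
    (fun k _ => (hf_deriv k).hasDerivWithinAt) (hf_mono.monotoneOn.mono Ioi_subset_Ici_self)]
  refine setLIntegral_congr_fun measurableSet_Ioi fun k (hk : 0 < k) => ?_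
  have hfk : √(f k ^ 2 - y ^ 2) = y * k := by
    rw [show f k ^ 2 - y ^ 2 = (y * k) ^ 2 by
      simp only [f]; rw [mul_pow, sq_sqrt (by positivity)]; ring]
    exact sqrt_sq (by positivity)
  have hsqrt : 0 < √(k ^ 2 + 1) := by positivity
  rw [hfk, ← mul_assoc, ← ENNReal.ofReal_mul (by positivity)]
  congr 2
  field_simp

theorem integrableOn_exp_neg_mul_sqrt_sq_add_one {y : ℝ} (hy : 0 < y) :
    IntegrableOn (fun k => exp (-y * √(k ^ 2 + 1))) (Ioi 0) := by
  refine (exp_neg_integrableOn_Ioi 0 hy).mono' (Continuous.aestronglyMeasurable (by fun_prop)) ?_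
  refine (ae_restrict_mem measurableSet_Ioi).mono fun k (hk : 0 < k) => ?_
  rw [norm_of_nonneg (exp_pos _).le, exp_le_exp, neg_mul, neg_mul, neg_le_neg_iff]
  gcongr
  exact le_sqrt_of_sq_le (by linarith)

theorem ofReal_K0_eq_lintegral {y : ℝ} (hy : 0 < y) :
    ENNReal.ofReal (K0 y)
      = ∫⁻ r in Ioi y, ENNReal.ofReal (1 / √(r ^ 2 - y ^ 2)) * ENNReal.ofReal (exp (-r)) := by
  have hint : IntegrableOn (fun k => exp (-y * √(k ^ 2 + 1)) / √(k ^ 2 + 1)) (Ioi 0) := by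
    refine (integrableOn_exp_neg_mul_sqrt_sq_add_one hy).mono'
      ((Continuous.div (by fun_prop) (by fun_prop) fun k => by positivity).aestronglyMeasurable)
      (Eventually.of_forall fun k => ?_)
    rw [norm_of_nonneg (by positivity)]
    exact div_le_self (exp_pos _).le (one_le_sqrt.mpr (by nlinarith))
  rw [K0, ofReal_integral_eq_lintegral_ofReal hint (Eventually.of_forall fun k => by positivity),
    lintegral_Ioi_inv_sqrt_sq_sub_sq_mul hy]
  refine setLIntegral_congr_fun measurableSet_Ioi fun k _ => ?_
  rw [← ENNReal.ofReal_mul (by positivity), neg_mul, one_div_mul_eq_div]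

theorem ofReal_mul_K1_eq_lintegral {y : ℝ} (hy : 0 < y) :
    ENNReal.ofReal (y * K1 y)
      = ∫⁻ r in Ioi y, ENNReal.ofReal (1 / √(r ^ 2 - y ^ 2)) * ENNReal.ofReal (r * exp (-r)) := by
  rw [K1, ← integral_const_mul, ofReal_integral_eq_lintegral_ofReal
    ((integrableOn_exp_neg_mul_sqrt_sq_add_one hy).const_mul y)
    (Eventually.of_forall fun k => by positivity), lintegral_Ioi_inv_sqrt_sq_sub_sq_mul hy]
  refine setLIntegral_congr_fun measurableSet_Ioi fun k _ => ?_
  have hsqrt : 0 < √(k ^ 2 + 1) := by positivity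
  rw [← ENNReal.ofReal_mul (by positivity)]
  congr 1
  field_simp

theorem K0_nonneg (x : ℝ) : 0 ≤ K0 x := integral_nonneg fun _ => by positivity

theorem K1_nonneg (x : ℝ) : 0 ≤ K1 x := integral_nonneg fun _ => by positivity

theorem stronglyMeasurable_K0 : StronglyMeasurable K0 := by
  have : Continuous fun p : ℝ × ℝ => exp (-p.1 * √(p.2 ^ 2 + 1)) / √(p.2 ^ 2 + 1) :=
    .div (by fun_prop) (by fun_prop) fun p => by positivity
  exact this.stronglyMeasurable.integral_prod_right'

theorem stronglyMeasurable_K1 : StronglyMeasurable K1 :=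
  (by fun_prop : Continuous fun p : ℝ × ℝ => exp (-p.1 * √(p.2 ^ 2 + 1))).stronglyMeasurable
    |>.integral_prod_right'

theorem lintegral_Ioo_mul_sqrt_div_sqrt {s r : ℝ} (hs : 0 ≤ s) (hsr : s < r) :
    ∫⁻ y in Ioo s r, ENNReal.ofReal (y * √(y ^ 2 - s ^ 2) / √(r ^ 2 - y ^ 2))
      = ENNReal.ofReal (π / 4 * (r ^ 2 - s ^ 2)) := by
  set c := r ^ 2 - s ^ 2 with hc_def
  have hc : 0 < c := by nlinarith
  set g : ℝ → ℝ := fun θ => √(s ^ 2 + c * sin θ ^ 2)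
  have hg_mono : StrictMonoOn g (Icc 0 (π / 2)) := fun a ha b hb hab => by
    have hsin : sin a < sin b := strictMonoOn_sin
      ⟨by linarith [ha.1, pi_pos], ha.2⟩ ⟨by linarith [hb.1, pi_pos], hb.2⟩ hab
    have ha0 : 0 ≤ sin a := sin_nonneg_of_nonneg_of_le_pi ha.1 (by linarith [ha.2, pi_pos])
    simp only [g]
    gcongr
  have hg_image : g '' Ioo 0 (π / 2) = Ioo s r := by
    have hg0 : g 0 = s := by simp [g, sqrt_sq hs]
    have hgπ : g (π / 2) = r := by simp [g, c, sqrt_sq (hs.trans hsr.le)]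
    refine (hg0 ▸ hgπ ▸ hg_mono.image_Ioo_subset).antisymm ?_
    exact hg0 ▸ hgπ ▸ intermediate_value_Ioo (by positivity) (by fun_prop)
  have hg_pos {θ : ℝ} (hθ : θ ∈ Ioo 0 (π / 2)) : 0 < s ^ 2 + c * sin θ ^ 2 := by
    have := sin_pos_of_pos_of_lt_pi hθ.1 (by linarith [hθ.2, pi_pos])
    positivity
  have hg_deriv {θ : ℝ} (hθ : θ ∈ Ioo 0 (π / 2)) :
      HasDerivAt g (c * sin θ * cos θ / g θ) θ := by
    refine (((hasDerivAt_sin θ).pow 2).const_mul c |>.const_add (s ^ 2) |>.sqrt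
      (hg_pos hθ).ne').congr_deriv ?_
    have : 0 < √(s ^ 2 + c * sin θ ^ 2) := sqrt_pos.mpr (hg_pos hθ)
    simp only [g, Pi.pow_apply]
    field_simp
    ring
  rw [← hg_image, lintegral_image_eq_lintegral_deriv_mul_of_monotoneOn measurableSet_Ioo
    (fun θ hθ => (hg_deriv hθ).hasDerivWithinAt) (hg_mono.monotoneOn.mono Ioo_subset_Icc_self)]
  have hintegrand : EqOn (fun θ => ENNReal.ofReal (c * sin θ * cos θ / g θ)
      * ENNReal.ofReal (g θ * √(g θ ^ 2 - s ^ 2) / √(r ^ 2 - g θ ^ 2)))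
      (fun θ => ENNReal.ofReal (c * sin θ ^ 2)) (Ioo 0 (π / 2)) := fun θ hθ => by
    dsimp only
    have hsin : 0 < sin θ := sin_pos_of_pos_of_lt_pi hθ.1 (by linarith [hθ.2, pi_pos])
    have hcos : 0 < cos θ := cos_pos_of_mem_Ioo ⟨by linarith [hθ.1, pi_pos], hθ.2⟩
    have hgθ : g θ ^ 2 = s ^ 2 + c * sin θ ^ 2 := sq_sqrt (hg_pos hθ).le
    have h1 : √(g θ ^ 2 - s ^ 2) = √c * sin θ := by
      rw [hgθ, add_sub_cancel_left, sqrt_mul hc.le, sqrt_sq hsin.le]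
    have h2 : √(r ^ 2 - g θ ^ 2) = √c * cos θ := by
      rw [hgθ, show r ^ 2 - (s ^ 2 + c * sin θ ^ 2) = c * cos θ ^ 2 by
        linear_combination (-c) * sin_sq_add_cos_sq θ - hc_def, sqrt_mul hc.le, sqrt_sq hcos.le]
    have : 0 < g θ := sqrt_pos.mpr (hg_pos hθ)
    have : 0 < √c := sqrt_pos.mpr hc
    rw [h1, h2, ← ENNReal.ofReal_mul (by positivity)]
    congr 1
    field_simp
  have hint : ∫ θ in Ioo 0 (π / 2), c * sin θ ^ 2 = π / 4 * c := by
    rw [← integral_Ioc_eq_integral_Ioo, ← intervalIntegral.integral_of_le (by positivity),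
      intervalIntegral.integral_const_mul, integral_sin_sq]
    simp only [sin_zero, cos_zero, sin_pi_div_two, cos_pi_div_two, mul_zero, mul_one, sub_self,
      zero_add, sub_zero]
    ring
  rw [setLIntegral_congr_fun measurableSet_Ioo hintegrand, ← hint,
    ofReal_integral_eq_lintegral_ofReal]
  · exact (Continuous.integrableOn_Icc (by fun_prop)).mono_set Ioo_subset_Icc_self
  · exact Eventually.of_forall fun θ => by positivity

theorem setLIntegral_eq_of_subset_of_forall_sdiff_eq_zero {α : Type*} [MeasurableSpace α]
    {μ : Measure α} {s t : Set α} {f : α → ℝ≥0∞} (hs : MeasurableSet s) (ht : MeasurableSet t)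
    (hst : s ⊆ t) (hf : ∀ x ∈ t \ s, f x = 0) :
    ∫⁻ x in t, f x ∂μ = ∫⁻ x in s, f x ∂μ := by
  rw [← union_sdiff_cancel hst, lintegral_union (ht.diff hs) disjoint_sdiff_right,
    setLIntegral_congr_fun (ht.diff hs) hf, lintegral_zero, add_zero]

theorem lintegral_Ioi_mul_lintegral_Ioi_inv_sqrt {s : ℝ} (hs : 0 ≤ s) {w : ℝ → ℝ≥0∞}
    (hw : Measurable w) :
    ∫⁻ y in Ioi s, ENNReal.ofReal (y * √(y ^ 2 - s ^ 2))
        * ∫⁻ r in Ioi y, ENNReal.ofReal (1 / √(r ^ 2 - y ^ 2)) * w r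
      = ∫⁻ r in Ioi s, ENNReal.ofReal (π / 4 * (r ^ 2 - s ^ 2)) * w r := by
  set F : ℝ → ℝ → ℝ≥0∞ := fun y r =>
    ENNReal.ofReal (y * √(y ^ 2 - s ^ 2) / √(r ^ 2 - y ^ 2)) * w r
  -- Junk values at work: `√(r ^ 2 - y ^ 2) = 0` for `r ≤ y`, and `x / 0 = 0`.
  have hF_zero {y r : ℝ} (hr : 0 ≤ r) (hry : r ≤ y) : F y r = 0 := by
    simp [F, sqrt_eq_zero_of_nonpos (by nlinarith : r ^ 2 - y ^ 2 ≤ 0)]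
  calc _ = ∫⁻ y in Ioi s, ∫⁻ r in Ioi s, F y r := by
        refine setLIntegral_congr_fun measurableSet_Ioi fun y (hy : s < y) => ?_
        rw [setLIntegral_eq_of_subset_of_forall_sdiff_eq_zero measurableSet_Ioi measurableSet_Ioi
          (Ioi_subset_Ioi hy.le) fun r hr => hF_zero (hs.trans hr.1.le) (not_lt.mp hr.2),
          ← lintegral_const_mul' _ _ ENNReal.ofReal_ne_top]
        refine setLIntegral_congr_fun measurableSet_Ioi fun r _ => ?_
        have hy0 : 0 ≤ y := hs.trans hy.le
        rw [← mul_assoc, ← ENNReal.ofReal_mul (by positivity), mul_one_div]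
    _ = ∫⁻ r in Ioi s, ∫⁻ y in Ioi s, F y r := lintegral_lintegral_swap (by fun_prop)
    _ = _ := by
        refine setLIntegral_congr_fun measurableSet_Ioi fun r (hr : s < r) => ?_
        rw [setLIntegral_eq_of_subset_of_forall_sdiff_eq_zero measurableSet_Ioo measurableSet_Ioi
          Ioo_subset_Ioi_self fun y ⟨hsy, hy⟩ =>
            hF_zero (hs.trans hr.le) (not_lt.mp fun hyr => hy ⟨hsy, hyr⟩),
          lintegral_mul_const _ (by fun_prop), lintegral_Ioo_mul_sqrt_div_sqrt hs hr]

theorem setIntegral_Ioi_mul_mul_sqrt_sq_sub_sq {s : ℝ} (hs : 0 ≤ s) {G w : ℝ → ℝ}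
    (hG_meas : AEStronglyMeasurable G (volume.restrict (Ioi s)))
    (hG_nonneg : ∀ y ∈ Ioi s, 0 ≤ G y) (hw_meas : Measurable w)
    (hw_nonneg : ∀ r ∈ Ioi s, 0 ≤ w r)
    (hG : ∀ y ∈ Ioi s, ENNReal.ofReal (G y)
      = ∫⁻ r in Ioi y, ENNReal.ofReal (1 / √(r ^ 2 - y ^ 2)) * ENNReal.ofReal (w r)) :
    ∫ y in Ioi s, y * G y * √(y ^ 2 - s ^ 2) = π / 4 * ∫ r in Ioi s, (r ^ 2 - s ^ 2) * w r := by
  have hsq_nonneg {r : ℝ} (hr : r ∈ Ioi s) : 0 ≤ r ^ 2 - s ^ 2 := by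
    have : s < r := hr
    nlinarith
  rw [← integral_const_mul, integral_eq_lintegral_of_nonneg_ae, integral_eq_lintegral_of_nonneg_ae]
  · congr 1
    calc _ = ∫⁻ y in Ioi s, ENNReal.ofReal (y * √(y ^ 2 - s ^ 2))
            * ∫⁻ r in Ioi y, ENNReal.ofReal (1 / √(r ^ 2 - y ^ 2)) * ENNReal.ofReal (w r) := by
          refine setLIntegral_congr_fun measurableSet_Ioi fun y (hy : s < y) => ?_
          have : 0 ≤ y := hs.trans hy.le
          rw [← hG y hy, ← ENNReal.ofReal_mul (by positivity), mul_right_comm]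
      _ = ∫⁻ r in Ioi s, ENNReal.ofReal (π / 4 * (r ^ 2 - s ^ 2)) * ENNReal.ofReal (w r) :=
          lintegral_Ioi_mul_lintegral_Ioi_inv_sqrt hs hw_meas.ennreal_ofReal
      _ = _ := by
          refine setLIntegral_congr_fun measurableSet_Ioi fun r hr => ?_
          have := hsq_nonneg hr
          rw [← ENNReal.ofReal_mul (by positivity), mul_assoc]
  · filter_upwards [ae_restrict_mem measurableSet_Ioi] with r hr
    have := hsq_nonneg hr
    have := hw_nonneg r hr
    positivity
  · exact (by fun_prop : Measurable fun r => π / 4 * ((r ^ 2 - s ^ 2) * w r)).aestronglyMeasurable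
  · filter_upwards [ae_restrict_mem measurableSet_Ioi] with y (hy : s < y)
    have := hG_nonneg y hy
    have : 0 ≤ y := hs.trans hy.le
    positivity
  · exact (aestronglyMeasurable_id.mul hG_meas).mul
      (by fun_prop : Continuous _).aestronglyMeasurable

theorem tendsto_eval_mul_exp_neg_atTop (p : ℝ[X]) :
    Tendsto (fun r => p.eval r * exp (-r)) atTop (𝓝 0) := by
  induction p using Polynomial.induction_on' with
  | add p q hp hq => simpa [add_mul] using hp.add hq
  | monomial n a => simpa [mul_assoc] using (tendsto_pow_mul_exp_neg_atTop_nhds_zero n).const_mul a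

theorem integral_Ioi_mul_exp_neg_of_eval_sub_derivative (p : ℝ[X]) {f : ℝ → ℝ} {s : ℝ}
    (hpf : ∀ r, (p - derivative p).eval r = f r) (hf : ∀ r ∈ Ioi s, 0 ≤ f r) :
    ∫ r in Ioi s, f r * exp (-r) = p.eval s * exp (-s) := by
  have hderiv (r : ℝ) : HasDerivAt (fun r => -(p.eval r * exp (-r))) (f r * exp (-r)) r :=
    ((p.hasDerivAt r).mul (hasDerivAt_neg r).exp).neg.congr_deriv (by
      rw [← hpf, eval_sub]; ring)
  rw [integral_Ioi_of_hasDerivAt_of_nonneg' (fun r _ => hderiv r)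
    (fun r hr => mul_nonneg (hf r hr) (exp_pos _).le) (tendsto_eval_mul_exp_neg_atTop p).neg]
  simp

theorem integral_Ioi_sq_sub_sq_mul_exp_neg {s : ℝ} (hs : 0 ≤ s) :
    ∫ r in Ioi s, (r ^ 2 - s ^ 2) * exp (-r) = 2 * (1 + s) * exp (-s) := by
  rw [integral_Ioi_mul_exp_neg_of_eval_sub_derivative (X ^ 2 + C 2 * X + C (2 - s ^ 2))
    (fun r => by
      simp only [derivative_add, derivative_X_pow, derivative_C_mul_X, derivative_C, eval_sub,
        eval_add, eval_mul, eval_pow, eval_X, eval_C, eval_zero]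
      ring)
    fun r (hr : s < r) => by nlinarith]
  simp only [eval_add, eval_mul, eval_pow, eval_X, eval_C]
  ring

theorem integral_Ioi_sq_sub_sq_mul_mul_exp_neg {s : ℝ} (hs : 0 ≤ s) :
    ∫ r in Ioi s, (r ^ 2 - s ^ 2) * (r * exp (-r)) = 2 * (3 + 3 * s + s ^ 2) * exp (-s) := by
  simp_rw [← mul_assoc]
  rw [integral_Ioi_mul_exp_neg_of_eval_sub_derivative
    (X ^ 3 + C 3 * X ^ 2 + C (6 - s ^ 2) * X + C (6 - s ^ 2))
    (fun r => by
      simp only [derivative_add, derivative_X_pow, derivative_C_mul_X, derivative_C_mul_X_pow,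
        derivative_C, eval_sub, eval_add, eval_mul, eval_pow, eval_X, eval_C, eval_zero]
      ring)
    fun r (hr : s < r) => mul_nonneg (by nlinarith) (by linarith)]
  simp only [eval_add, eval_mul, eval_pow, eval_X, eval_C]
  ring

theorem besselK_JL_closed_forms (s : ℝ) (hs : 0 ≤ s) :
    (∫ y in Set.Ioi s, y * K0 y * Real.sqrt (y ^ 2 - s ^ 2))
        = (π / 2) * (1 + s) * Real.exp (-s) ∧
    (1 / 2) * (∫ y in Set.Ioi s, y ^ 2 * K1 y * Real.sqrt (y ^ 2 - s ^ 2))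
        = (π / 4) * (3 + 3 * s + s ^ 2) * Real.exp (-s) := by
  have hJ := setIntegral_Ioi_mul_mul_sqrt_sq_sub_sq hs stronglyMeasurable_K0.aestronglyMeasurable
    (fun y _ => K0_nonneg y) (by fun_prop) (fun r _ => (exp_pos _).le)
    fun y hy => ofReal_K0_eq_lintegral (hs.trans_lt hy)
  have hL := setIntegral_Ioi_mul_mul_sqrt_sq_sub_sq (G := fun y => y * K1 y) hs
    (aestronglyMeasurable_id.mul stronglyMeasurable_K1.aestronglyMeasurable)
    (fun y (hy : s < y) => mul_nonneg (hs.trans hy.le) (K1_nonneg y)) (by fun_prop)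
    (fun r (hr : s < r) => mul_nonneg (hs.trans hr.le) (exp_pos _).le)
    fun y hy => ofReal_mul_K1_eq_lintegral (hs.trans_lt hy)
  constructor
  · rw [hJ, integral_Ioi_sq_sub_sq_mul_exp_neg hs]
    ring
  · have hsq : (fun y => y ^ 2 * K1 y * √(y ^ 2 - s ^ 2))
        = fun y => y * (y * K1 y) * √(y ^ 2 - s ^ 2) := by
      ext
      ring
    rw [hsq, hL, integral_Ioi_sq_sub_sq_mul_mul_exp_neg hs]
    ring
end
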